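/- arXiv:2005.06757 — 2 statements merged into one kernel-verified Lean document; each statement's English description precedes it below -/
import Mathlib

section
/- Lemma 3 (two-variable AM–GM inequality for quenched averages, separate flips): Let B, C ⊆ V with B ≠ C, suppose P_B satisfies the density-ratio condition with parameter b ∈ ℝ and P_C satisfies the density-ratio condition with parameter c ∈ ℝ. Let X, Y and f be measurable real-valued functions of the coupling vector J such that X(J) > 0, Y(J) > 0, X(flip_B J) = 1/X(J), and Y(flip_C J) = 1/Y(J) for all J, and f(J) ≥ 0, f(flip_B J) = f(J), and f(flip_C J) = f(J) for all J. Then E[f(J) X(J) Y(J)] ≥ E[f(J) exp(−b J_B) exp(−c J_C)]. -/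
open MeasureTheory Real

variable {V : Type*}

/-- Spin value of a configuration at a site: `+1` or `-1`. -/
noncomputable def spin (σ : V → Bool) (i : V) : ℝ := if σ i then 1 else -1

/-- `σ_A = ∏_{i ∈ A} σ_i`. -/
noncomputable def sigmaA (A : Finset V) (σ : V → Bool) : ℝ := ∏ i ∈ A, spin σ i

/-- `β Σ_A λ_A J_A σ_A` (minus the Hamiltonian, times β). -/
noncomputable def energy [Fintype V] [DecidableEq V] (β : ℝ) (lam J : Finset V → ℝ)
    (σ : V → Bool) : ℝ := β * ∑ A : Finset V, lam A * J A * sigmaA A σ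

/-- Partition function `Z_J`. -/
noncomputable def Zfun [Fintype V] [DecidableEq V] (β : ℝ) (lam J : Finset V → ℝ) : ℝ :=
  ∑ σ : V → Bool, Real.exp (energy β lam J σ)

/-- Gibbs expectation `⟨σ_B⟩_J`. -/
noncomputable def corr [Fintype V] [DecidableEq V] (β : ℝ) (lam J : Finset V → ℝ)
    (B : Finset V) : ℝ :=
  (∑ σ : V → Bool, sigmaA B σ * Real.exp (energy β lam J σ)) / Zfun β lam J

/-- Gibbs expectation `⟨σ_B σ_C⟩_J`. -/
noncomputable def corr2 [Fintype V] [DecidableEq V] (β : ℝ) (lam J : Finset V → ℝ)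
    (B C : Finset V) : ℝ :=
  (∑ σ : V → Bool, sigmaA B σ * sigmaA C σ * Real.exp (energy β lam J σ)) / Zfun β lam J

/-- Negate the coupling indexed by `B`. -/
noncomputable def flipJ [DecidableEq V] (B : Finset V) (J : Finset V → ℝ) : Finset V → ℝ :=
  Function.update J B (-(J B))

/-- The density-ratio condition `P(-x) = exp(-2 b x) P(x)`: the pushforward of `P` under
negation equals the measure with density `x ↦ exp (-2 b x)` with respect to `P`. -/
def densityRatio (P : Measure ℝ) (b : ℝ) : Prop :=
  P.map (fun x => -x) = P.withDensity (fun x => ENNReal.ofReal (Real.exp (-2 * b * x)))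

open scoped ENNReal

/-! Flipping `J_B` is a change of measure: by the density-ratio condition, the law of `flipJ B J`
has density `exp (-2 b J_B)` with respect to the law of `J`. Hence, for `g = f X Y`, each of
`g J`, `g (flip_B J) e^{-2 b J_B}`, `g (flip_C J) e^{-2 c J_C}` and
`g (flip_C flip_B J) e^{-2 b J_B - 2 c J_C}` has expectation `E[g]`. Since the flips invert `X`
and `Y` and fix `f`, the product of these four terms is `(f e^{-b J_B} e^{-c J_C})^4`, so by
AM-GM their sum is at least `4 f e^{-b J_B} e^{-c J_C}`. -/

theorem four_mul_le_add_of_mul_eq_pow_four {a b c d m : ℝ} (ha : 0 ≤ a) (hb : 0 ≤ b)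
    (hc : 0 ≤ c) (hd : 0 ≤ d) (hm : 0 ≤ m) (h : a * b * c * d = m ^ 4) :
    4 * m ≤ a + b + c + d := by
  have hw : (0 : ℝ) ≤ ((4 : ℕ) : ℝ)⁻¹ := by positivity
  have amgm := geom_mean_le_arith_mean4_weighted hw hw hw hw ha hb hc hd (by norm_num)
  rw [← mul_rpow ha hb, ← mul_rpow (by positivity) hc, ← mul_rpow (by positivity) hd, h,
    pow_rpow_inv_natCast hm (by norm_num)] at amgm
  linarith

theorem four_mul_le_of_flip_terms {F x y x' y' s t : ℝ} (hF : 0 ≤ F) (hx : 0 < x) (hy : 0 < y)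
    (hx' : 0 < x') (hy' : 0 < y') (hs : 0 ≤ s) (ht : 0 ≤ t) :
    4 * (F * s * t) ≤ F * x * y + F * x⁻¹ * y' * s ^ 2 + F * x' * y⁻¹ * t ^ 2
      + F * x'⁻¹ * y'⁻¹ * t ^ 2 * s ^ 2 :=
  four_mul_le_add_of_mul_eq_pow_four (by positivity) (by positivity) (by positivity)
    (by positivity) (by positivity) (by field_simp)

theorem MeasureTheory.Measure.pi_update_withDensity {ι : Type*} [Fintype ι] [DecidableEq ι]
    {α : ι → Type*} [∀ i, MeasurableSpace (α i)] (μ : ∀ i, Measure (α i))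
    [∀ i, SigmaFinite (μ i)] (i : ι) {ρ : α i → ℝ≥0∞} (hρ : Measurable ρ)
    [SigmaFinite ((μ i).withDensity ρ)] :
    Measure.pi (Function.update μ i ((μ i).withDensity ρ))
      = (Measure.pi μ).withDensity (fun x => ρ (x i)) := by
  have : ∀ j, SigmaFinite (Function.update μ i ((μ i).withDensity ρ) j) := by
    intro j
    rcases eq_or_ne j i with rfl | hj
    · rwa [Function.update_self]
    · rw [Function.update_of_ne hj]; infer_instance
  refine Measure.pi_eq fun s hs => ?_
  rw [withDensity_apply _ (MeasurableSet.univ_pi hs), Measure.restrict_pi_pi,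
    ← lintegral_map hρ (measurable_pi_apply i), Measure.pi_map_eval, lintegral_smul_measure,
    ← withDensity_apply _ (hs i), ← Finset.mul_prod_erase _ _ (Finset.mem_univ i),
    Function.update_self, mul_comm]
  congr 1
  refine Finset.prod_congr rfl fun j hj => ?_
  rw [Function.update_of_ne (Finset.ne_of_mem_erase hj), Measure.restrict_apply_univ]

section ChangeOfVariables

variable {α : Type*} [MeasurableSpace α] {μ : Measure α} {φ : α → α} {w : α → ℝ}

theorem integrable_comp_mul_of_map_eq_withDensity (hφ : Measurable φ)
    (hφφ : Function.Involutive φ) (hw : Measurable w) (hw0 : ∀ x, 0 ≤ w x)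
    (hmap : μ.map φ = μ.withDensity (fun x => ENNReal.ofReal (w x)))
    {g : α → ℝ} (hg : Integrable g μ) :
    Integrable (fun x => g (φ x) * w x) μ := by
  let e := MeasurableEquiv.ofInvolutive φ hφφ hφ
  have he : (e : α → α) = φ := rfl
  have : Integrable (g ∘ φ) (μ.map e) := by
    rwa [integrable_map_equiv, he, Function.comp_assoc, hφφ.comp_self, Function.comp_id]
  rw [he, hmap, integrable_withDensity_iff hw.ennreal_ofReal
    (.of_forall fun _ => ENNReal.ofReal_lt_top)] at this
  simpa only [Function.comp_apply, ENNReal.toReal_ofReal (hw0 _)] using this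

theorem integral_comp_mul_of_map_eq_withDensity (hφ : Measurable φ)
    (hφφ : Function.Involutive φ) (hw : Measurable w) (hw0 : ∀ x, 0 ≤ w x)
    (hmap : μ.map φ = μ.withDensity (fun x => ENNReal.ofReal (w x))) (g : α → ℝ) :
    ∫ x, g (φ x) * w x ∂μ = ∫ x, g x ∂μ := by
  let e := MeasurableEquiv.ofInvolutive φ hφφ hφ
  have he : (e : α → α) = φ := rfl
  calc ∫ x, g (φ x) * w x ∂μ = ∫ x, (ENNReal.ofReal (w x)).toReal • g (φ x) ∂μ := by
        simp only [ENNReal.toReal_ofReal (hw0 _), smul_eq_mul, mul_comm]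
    _ = ∫ x, g (φ x) ∂μ.map e := by
        rw [← integral_withDensity_eq_integral_toReal_smul hw.ennreal_ofReal
          (.of_forall fun _ => ENNReal.ofReal_lt_top), he, hmap]
    _ = ∫ x, g x ∂μ := by
        rw [integral_map_equiv, he]
        simp only [hφφ _]

end ChangeOfVariables

section Flip

variable [DecidableEq V]

theorem flipJ_apply (B A : Finset V) (J : Finset V → ℝ) :
    flipJ B J A = if A = B then -J A else J A := by
  by_cases h : A = B
  · subst h; simp [flipJ]
  · simp [flipJ, h]

theorem flipJ_apply_of_ne {A B : Finset V} (h : A ≠ B) (J : Finset V → ℝ) : flipJ B J A = J A :=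
  Function.update_of_ne h _ _

theorem flipJ_involutive (B : Finset V) : Function.Involutive (flipJ B) := by
  intro J
  funext A
  simp only [flipJ_apply]
  split_ifs <;> simp

theorem flipJ_comm (B C : Finset V) (J : Finset V → ℝ) :
    flipJ B (flipJ C J) = flipJ C (flipJ B J) := by
  funext A
  simp only [flipJ_apply]
  split_ifs <;> simp_all

theorem measurable_flipJ (B : Finset V) : Measurable (flipJ B) := by
  refine measurable_pi_lambda _ fun A => ?_
  simp only [flipJ_apply]
  split_ifs
  exacts [(measurable_pi_apply A).neg, measurable_pi_apply A]

variable [Fintype V] {P : Finset V → Measure ℝ} [∀ A, IsProbabilityMeasure (P A)]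
  {B C : Finset V} {b c : ℝ}

theorem map_flipJ_pi (hPB : densityRatio (P B) b) :
    (Measure.pi P).map (flipJ B)
      = (Measure.pi P).withDensity (fun J => ENNReal.ofReal (exp (-2 * b * J B))) := by
  set ρ : ℝ → ℝ≥0∞ := fun x => ENNReal.ofReal (exp (-2 * b * x))
  have hρ : Measurable ρ := by fun_prop
  have : ∀ A, SigmaFinite (Function.update P B ((P B).withDensity ρ) A) := by
    intro A
    rcases eq_or_ne A B with rfl | hA
    · rw [Function.update_self]; infer_instance
    · rw [Function.update_of_ne hA]; infer_instance
  have hflip : MeasurePreserving (flipJ B) (Measure.pi P)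
      (Measure.pi (Function.update P B ((P B).withDensity ρ))) := by
    have := measurePreserving_pi P (Function.update P B ((P B).withDensity ρ))
      (f := fun A x => if A = B then -x else x) fun A => by
        rcases eq_or_ne A B with rfl | hA
        · simp only [↓reduceIte, Function.update_self]
          exact ⟨measurable_neg, hPB⟩
        · simp only [hA, if_false, Function.update_of_ne hA]
          exact MeasurePreserving.id _
    simpa only [← flipJ_apply] using this
  rw [hflip.map_eq, Measure.pi_update_withDensity P B hρ]

theorem integrable_flipJ_mul_exp (hPB : densityRatio (P B) b) {g : (Finset V → ℝ) → ℝ}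
    (hg : Integrable g (Measure.pi P)) :
    Integrable (fun J => g (flipJ B J) * exp (-2 * b * J B)) (Measure.pi P) :=
  integrable_comp_mul_of_map_eq_withDensity (measurable_flipJ B) (flipJ_involutive B)
    (by fun_prop) (fun _ => (exp_pos _).le) (map_flipJ_pi hPB) hg

theorem integral_flipJ_mul_exp (hPB : densityRatio (P B) b) (g : (Finset V → ℝ) → ℝ) :
    ∫ J, g (flipJ B J) * exp (-2 * b * J B) ∂(Measure.pi P) = ∫ J, g J ∂(Measure.pi P) :=
  integral_comp_mul_of_map_eq_withDensity (measurable_flipJ B) (flipJ_involutive B)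
    (by fun_prop) (fun _ => (exp_pos _).le) (map_flipJ_pi hPB) g

/-- The last term is the third one evaluated at `flipJ B J`, times `exp (-2 * b * J B)`, so that
its integral is computed by two successive changes of measure. -/
noncomputable def flipSum (B C : Finset V) (b c : ℝ) (g : (Finset V → ℝ) → ℝ)
    (J : Finset V → ℝ) : ℝ :=
  g J + g (flipJ B J) * exp (-2 * b * J B) + g (flipJ C J) * exp (-2 * c * J C)
    + g (flipJ C (flipJ B J)) * exp (-2 * c * flipJ B J C) * exp (-2 * b * J B)

theorem integrable_flipSum (hPB : densityRatio (P B) b)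
    (hPC : densityRatio (P C) c) {g : (Finset V → ℝ) → ℝ} (hg : Integrable g (Measure.pi P)) :
    Integrable (flipSum B C b c g) (Measure.pi P) :=
  ((hg.add (integrable_flipJ_mul_exp hPB hg)).add (integrable_flipJ_mul_exp hPC hg)).add
    (integrable_flipJ_mul_exp hPB (integrable_flipJ_mul_exp hPC hg))

theorem integral_flipSum (hPB : densityRatio (P B) b)
    (hPC : densityRatio (P C) c) {g : (Finset V → ℝ) → ℝ} (hg : Integrable g (Measure.pi P)) :
    ∫ J, flipSum B C b c g J ∂(Measure.pi P) = 4 * ∫ J, g J ∂(Measure.pi P) := by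
  set gC := fun J => g (flipJ C J) * exp (-2 * c * J C)
  have hgB := integrable_flipJ_mul_exp hPB hg
  have hgC : Integrable gC (Measure.pi P) := integrable_flipJ_mul_exp hPC hg
  have h12 : Integrable (fun J => g J + g (flipJ B J) * exp (-2 * b * J B)) (Measure.pi P) :=
    hg.add hgB
  have h123 : Integrable (fun J => g J + g (flipJ B J) * exp (-2 * b * J B) + gC J)
      (Measure.pi P) :=
    h12.add hgC
  change ∫ J, (g J + g (flipJ B J) * exp (-2 * b * J B) + gC J
    + gC (flipJ B J) * exp (-2 * b * J B)) ∂(Measure.pi P) = _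
  rw [integral_add h123 (integrable_flipJ_mul_exp hPB hgC), integral_add h12 hgC,
    integral_add hg hgB, integral_flipJ_mul_exp hPB, integral_flipJ_mul_exp hPB,
    integral_flipJ_mul_exp hPC]
  ring

end Flip

theorem lemma3_two_variable_AMGM_separate_general [Fintype V] [DecidableEq V]
    (P : Finset V → Measure ℝ) [∀ A, IsProbabilityMeasure (P A)]
    (B C : Finset V) (hBC : B ≠ C) (b c : ℝ)
    (hPB : densityRatio (P B) b) (hPC : densityRatio (P C) c)
    (X Y f : (Finset V → ℝ) → ℝ)
    (hXpos : ∀ J, 0 < X J) (hYpos : ∀ J, 0 < Y J)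
    (hXflip : ∀ J, X (flipJ B J) = 1 / X J)
    (hYflip : ∀ J, Y (flipJ C J) = 1 / Y J)
    (hf0 : ∀ J, 0 ≤ f J)
    (hfflipB : ∀ J, f (flipJ B J) = f J)
    (hfflipC : ∀ J, f (flipJ C J) = f J)
    (hint1 : Integrable (fun J => f J * X J * Y J) (Measure.pi P)) :
    ∫ J, f J * Real.exp (-b * J B) * Real.exp (-c * J C) ∂(Measure.pi P) ≤
      ∫ J, f J * X J * Y J ∂(Measure.pi P) := by
  have hexp : ∀ r x : ℝ, exp (-2 * r * x) = exp (-r * x) ^ 2 := fun r x => by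
    rw [← exp_nat_mul]; ring_nf
  have hpoint : ∀ J, 4 * (f J * exp (-b * J B) * exp (-c * J C))
      ≤ flipSum B C b c (fun J => f J * X J * Y J) J := by
    intro J
    simp only [flipSum, flipJ_apply_of_ne hBC.symm, hfflipC, hYflip, hexp]
    rw [← flipJ_comm B C]
    simp only [hfflipB, hXflip, one_div]
    exact four_mul_le_of_flip_terms (hf0 J) (hXpos J) (hYpos J) (hXpos _) (hYpos _)
      (exp_pos _).le (exp_pos _).le
  have hnonneg : ∀ J, 0 ≤ 4 * (f J * exp (-b * J B) * exp (-c * J C)) := fun J => by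
    have := hf0 J
    positivity
  have hmono := integral_mono_of_nonneg (.of_forall hnonneg) (integrable_flipSum hPB hPC hint1)
    (.of_forall hpoint)
  rw [integral_const_mul, integral_flipSum hPB hPC hint1] at hmono
  linarith

/-- Lemma 3: two-variable AM–GM inequality for quenched averages (separate flips). -/
theorem lemma3_two_variable_AMGM_separate [Fintype V] [DecidableEq V]
    (P : Finset V → Measure ℝ) [∀ A, IsProbabilityMeasure (P A)]
    (B C : Finset V) (hBC : B ≠ C) (b c : ℝ)
    (hPB : densityRatio (P B) b) (hPC : densityRatio (P C) c)
    (X Y f : (Finset V → ℝ) → ℝ)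
    (hX : Measurable X) (hY : Measurable Y) (hf : Measurable f)
    (hXpos : ∀ J, 0 < X J) (hYpos : ∀ J, 0 < Y J)
    (hXflip : ∀ J, X (flipJ B J) = 1 / X J)
    (hYflip : ∀ J, Y (flipJ C J) = 1 / Y J)
    (hf0 : ∀ J, 0 ≤ f J)
    (hfflipB : ∀ J, f (flipJ B J) = f J)
    (hfflipC : ∀ J, f (flipJ C J) = f J)
    (hint1 : Integrable (fun J => f J * X J * Y J) (Measure.pi P))
    (hint2 : Integrable (fun J => f J * Real.exp (-b * J B) * Real.exp (-c * J C))
      (Measure.pi P)) :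
    ∫ J, f J * Real.exp (-b * J B) * Real.exp (-c * J C) ∂(Measure.pi P) ≤
      ∫ J, f J * X J * Y J ∂(Measure.pi P) :=
  lemma3_two_variable_AMGM_separate_general P B C hBC b c hPB hPC X Y f hXpos hYpos hXflip hYflip
    hf0 hfflipB hfflipC hint1
end

section
/- Kitatani-type upper bound (Eq. (12)): Let B ⊆ V with λ_B > 0 and suppose the distribution P_B is symmetric. Then E[ J_B ⟨σ_B⟩_J ] ≤ E[ J_B tanh(β λ_B J_B) ]. -/
open MeasureTheory Real

variable {V : Type*}

/-!
Negating `J_B` preserves the product measure because `P_B` is symmetric, so it suffices that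
`g J = J_B (⟨σ_B⟩_J - tanh (β λ_B J_B))` satisfies `g J + g (flipJ B J) ≤ 0` pointwise.
Writing `exp (t σ_B) = cosh t + σ_B sinh t` gives `⟨σ_B⟩_J = (τ + m) / (1 + τ m)` with
`τ = tanh (β λ_B J_B)` and `m = ⟨σ_B⟩` at `J_B = 0`, which the flip leaves unchanged while
sending `τ` to `-τ`; the symmetrised sum is then `-2 J_B τ m² (1 - τ²) / (1 - τ² m²) ≤ 0`.
-/

theorem MeasureTheory.MeasurePreserving.integral_nonpos_of_add_comp_nonpos {α : Type*}
    [MeasurableSpace α] {μ : Measure α} {φ : α → α} (hφ : MeasurePreserving φ μ μ)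
    {g : α → ℝ} (hg : Integrable g μ) (h : ∀ x, g x + g (φ x) ≤ 0) :
    ∫ x, g x ∂μ ≤ 0 := by
  have hcomp : ∫ x, g (φ x) ∂μ = ∫ x, g x ∂μ := by
    rw [← integral_map hφ.aemeasurable (by rw [hφ.map_eq]; exact hg.aestronglyMeasurable),
      hφ.map_eq]
  have hgφ : Integrable (fun x => g (φ x)) μ := hφ.integrable_comp_of_integrable hg
  have hsum := integral_nonpos (μ := μ) h
  rw [integral_add hg hgφ, hcomp] at hsum
  linarith

theorem MeasureTheory.measurePreserving_update_apply {ι X : Type*} [Fintype ι] [DecidableEq ι]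
    [MeasurableSpace X] {P : ι → Measure X} [∀ i, SigmaFinite (P i)] (i : ι) {f : X → X}
    (hf : MeasurePreserving f (P i) (P i)) :
    MeasurePreserving (fun x => Function.update x i (f (x i))) (Measure.pi P) (Measure.pi P) := by
  have hcoord := measurePreserving_pi P P (f := Function.update (fun _ => id) i f) fun j => by
    rcases eq_or_ne j i with rfl | hj
    · simpa using hf
    · simpa [Function.update_of_ne hj] using MeasurePreserving.id (P j)
  convert hcoord using 2 with x
  funext j
  rcases eq_or_ne j i with rfl | hj <;> simp_all [Function.update_of_ne]

theorem mul_tanh_mul_nonneg {c : ℝ} (hc : 0 ≤ c) (x : ℝ) : 0 ≤ x * tanh (c * x) := by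
  rw [tanh_eq_sinh_div_cosh]
  rcases le_total 0 x with hx | hx
  · exact mul_nonneg hx (div_nonneg (sinh_nonneg_iff.2 (mul_nonneg hc hx)) (cosh_pos _).le)
  · exact mul_nonneg_of_nonpos_of_nonpos hx
      (div_nonpos_of_nonpos_of_nonneg (sinh_nonpos_iff.2 (mul_nonpos_of_nonneg_of_nonpos hc hx))
        (cosh_pos _).le)

theorem mul_add_div_one_add_mul_sub_add_neg_nonpos {a τ m : ℝ} (hτ : |τ| < 1) (hm : |m| ≤ 1)
    (haτ : 0 ≤ a * τ) :
    a * ((τ + m) / (1 + τ * m)) - a * τ + (-a * ((-τ + m) / (1 + -τ * m)) - -a * -τ) ≤ 0 := by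
  have hτm : |τ * m| < 1 := by
    rw [abs_mul]; nlinarith [abs_nonneg τ, abs_nonneg m]
  obtain ⟨hlo, hhi⟩ := abs_lt.1 hτm
  have hpos : 0 < 1 + τ * m := by linarith
  have hneg : 0 < 1 - τ * m := by linarith
  have hτsq : 0 ≤ 1 - τ ^ 2 := by nlinarith [sq_abs τ, abs_nonneg τ]
  have key : a * ((τ + m) / (1 + τ * m)) - a * τ + (-a * ((-τ + m) / (1 + -τ * m)) - -a * -τ) =
      -(2 * (a * τ) * m ^ 2 * (1 - τ ^ 2)) / ((1 + τ * m) * (1 - τ * m)) := by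
    rw [show 1 + -τ * m = 1 - τ * m by ring]
    field_simp
    ring
  rw [key]
  exact div_nonpos_of_nonpos_of_nonneg (neg_nonpos.2 (by positivity)) (by positivity)

theorem sigmaA_mul_self (A : Finset V) (σ : V → Bool) : sigmaA A σ * sigmaA A σ = 1 := by
  rw [sigmaA, ← Finset.prod_mul_distrib]
  refine Finset.prod_eq_one fun i _ => ?_
  unfold spin
  split_ifs <;> norm_num

theorem exp_mul_sigmaA (t : ℝ) (A : Finset V) (σ : V → Bool) :
    exp (t * sigmaA A σ) = cosh t + sigmaA A σ * sinh t := by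
  rcases mul_self_eq_one_iff.1 (sigmaA_mul_self A σ) with h | h <;> rw [h]
  · simp [cosh_add_sinh]
  · rw [mul_neg_one, ← cosh_sub_sinh]; ring

section Gibbs

variable [Fintype V] [DecidableEq V]

theorem energy_eq_add_update_zero (β : ℝ) (lam J : Finset V → ℝ) (B : Finset V)
    (σ : V → Bool) :
    energy β lam J σ =
      β * lam B * J B * sigmaA B σ + energy β lam (Function.update J B 0) σ := by
  have hsplit : ∀ A : Finset V, lam A * J A * sigmaA A σ =
      (if A = B then lam B * J B * sigmaA B σ else 0) +
        lam A * Function.update J B 0 A * sigmaA A σ := by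
    intro A
    rcases eq_or_ne A B with rfl | h
    · simp
    · simp [h]
  rw [energy, energy, Finset.sum_congr rfl fun A _ => hsplit A, Finset.sum_add_distrib,
    Finset.sum_ite_eq', if_pos (Finset.mem_univ B)]
  ring

theorem sum_mul_exp_energy (β : ℝ) (lam J : Finset V → ℝ) (B : Finset V)
    (f : (V → Bool) → ℝ) :
    ∑ σ, f σ * exp (energy β lam J σ) =
      cosh (β * lam B * J B) * ∑ σ, f σ * exp (energy β lam (Function.update J B 0) σ) +
        sinh (β * lam B * J B) *
          ∑ σ, f σ * sigmaA B σ * exp (energy β lam (Function.update J B 0) σ) := by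
  rw [Finset.mul_sum, Finset.mul_sum, ← Finset.sum_add_distrib]
  refine Finset.sum_congr rfl fun σ _ => ?_
  rw [energy_eq_add_update_zero β lam J B σ, exp_add, exp_mul_sigmaA]
  ring

theorem Zfun_pos (β : ℝ) (lam J : Finset V → ℝ) : 0 < Zfun β lam J :=
  Finset.sum_pos (fun _ _ => exp_pos _) Finset.univ_nonempty

theorem abs_corr_le_one (β : ℝ) (lam J : Finset V → ℝ) (B : Finset V) :
    |corr β lam J B| ≤ 1 := by
  rw [corr, abs_div, abs_of_pos (Zfun_pos β lam J), div_le_one (Zfun_pos β lam J)]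
  refine (Finset.abs_sum_le_sum_abs _ _).trans_eq (Finset.sum_congr rfl fun σ _ => ?_)
  have hσ : |sigmaA B σ| = 1 := by
    rcases mul_self_eq_one_iff.1 (sigmaA_mul_self B σ) with h | h <;> simp [h]
  rw [abs_mul, hσ, one_mul, abs_of_pos (exp_pos _)]

theorem corr_eq_tanh_add_div (β : ℝ) (lam J : Finset V → ℝ) (B : Finset V) :
    corr β lam J B =
      (tanh (β * lam B * J B) + corr β lam (Function.update J B 0) B) /
        (1 + tanh (β * lam B * J B) * corr β lam (Function.update J B 0) B) := by
  set J₀ := Function.update J B 0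
  set t := β * lam B * J B
  have hZ : Zfun β lam J = cosh t * Zfun β lam J₀ +
      sinh t * ∑ σ, sigmaA B σ * exp (energy β lam J₀ σ) := by
    simpa [Zfun] using sum_mul_exp_energy β lam J B fun _ => 1
  have hN : ∑ σ, sigmaA B σ * exp (energy β lam J σ) =
      cosh t * ∑ σ, sigmaA B σ * exp (energy β lam J₀ σ) + sinh t * Zfun β lam J₀ := by
    simpa [Zfun, sigmaA_mul_self] using sum_mul_exp_energy β lam J B (sigmaA B)
  have hZ₀ := (Zfun_pos β lam J₀).ne'
  have hcosh := (cosh_pos t).ne'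
  rw [corr, corr, hN, hZ, tanh_eq_sinh_div_cosh, div_add_div _ _ hcosh hZ₀, div_mul_div_comm, one_add_div (mul_ne_zero hcosh hZ₀),
    div_div_div_cancel_right₀ (mul_ne_zero hcosh hZ₀)]
  ring

theorem corr_sub_tanh_add_flipJ_nonpos {β : ℝ} {lam : Finset V → ℝ} {B : Finset V}
    (hβlam : 0 ≤ β * lam B) (J : Finset V → ℝ) :
    (J B * corr β lam J B - J B * tanh (β * lam B * J B)) +
      (flipJ B J B * corr β lam (flipJ B J) B -
        flipJ B J B * tanh (β * lam B * flipJ B J B)) ≤ 0 := by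
  have hflipB : flipJ B J B = -J B := Function.update_self ..
  have hflip₀ : Function.update (flipJ B J) B 0 = Function.update J B 0 :=
    Function.update_idem ..
  rw [corr_eq_tanh_add_div β lam J B, corr_eq_tanh_add_div β lam (flipJ B J) B, hflip₀, hflipB,
    mul_neg, tanh_neg]
  exact mul_add_div_one_add_mul_sub_add_neg_nonpos (abs_tanh_lt_one _) (abs_corr_le_one ..)
    (mul_tanh_mul_nonneg hβlam _)

end Gibbs

/-- Kitatani-type upper bound (Eq. (12)). -/
theorem kitatani_upper_bound [Fintype V] [DecidableEq V]
    (β : ℝ) (hβ : 0 < β) (lam : Finset V → ℝ)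
    (P : Finset V → Measure ℝ) [∀ A, IsProbabilityMeasure (P A)]
    (B : Finset V) (hlamB : 0 < lam B)
    (hPB : (P B).map (fun x => -x) = P B)
    (hint1 : Integrable (fun J => J B * corr β lam J B) (Measure.pi P))
    (hint2 : Integrable (fun J => J B * Real.tanh (β * lam B * J B)) (Measure.pi P)) :
    ∫ J, J B * corr β lam J B ∂(Measure.pi P) ≤
      ∫ J, J B * Real.tanh (β * lam B * J B) ∂(Measure.pi P) := by
  have hflip : MeasurePreserving (flipJ B) (Measure.pi P) (Measure.pi P) :=
    measurePreserving_update_apply B ⟨measurable_neg, hPB⟩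
  have hgap := hflip.integral_nonpos_of_add_comp_nonpos (hint1.sub hint2)
    (corr_sub_tanh_add_flipJ_nonpos (mul_pos hβ hlamB).le)
  rw [Pi.sub_def, integral_sub hint1 hint2] at hgap
  linarith
end
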